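/- Let g = x + x²y + z² + t³ ∈ ℂ[x,y,z,t] (the Koras–Russell threefold polynomial). Then g is a factorially closed polynomial, i.e., for all nonzero p, q ∈ ℂ[x,y,z,t], pq ∈ ℂ[g] implies p ∈ ℂ[g] and q ∈ ℂ[g]. -/

import Mathlib

/-!
Every fibre polynomial `g - c` is prime: with `y` as the polynomial variable over `ℂ[x,z,t]`
it is the linear polynomial `x² y + (x + z² + t³ - c)`, whose coefficients are coprime because
the prime `x` does not divide `x + z² + t³ - c`. Over the algebraically closed `ℂ`, a nonzero
element of `ℂ[g]` is a constant times a product of such primes `g - c`; since the units of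
`ℂ[x,y,z,t]` are constants, every factor of it is a unit times a subproduct, hence lies in
`ℂ[g]`.
-/

open MvPolynomial

theorem Submonoid.mem_and_mem_of_mul_eq_unit_mul_prod {M : Type*} [CommMonoidWithZero M]
    [IsCancelMulZero M] (S : Submonoid M) (hS : ∀ u : M, IsUnit u → u ∈ S) {u : M}
    (hu : IsUnit u) (s : Multiset M) (hs : ∀ π ∈ s, Prime π ∧ π ∈ S) {p q : M}
    (h : p * q = u * s.prod) :
    p ∈ S ∧ q ∈ S := by
  induction s using Multiset.induction_on generalizing p q with
  | empty =>
    rw [Multiset.prod_zero, mul_one] at h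
    have hpq : IsUnit (p * q) := h ▸ hu
    exact ⟨hS p (isUnit_of_mul_isUnit_left hpq), hS q (isUnit_of_mul_isUnit_right hpq)⟩
  | cons π s ih =>
    obtain ⟨hπ, hπS⟩ := hs π (Multiset.mem_cons_self π s)
    have hs' : ∀ x ∈ s, Prime x ∧ x ∈ S := fun x hx => hs x (Multiset.mem_cons_of_mem hx)
    rw [Multiset.prod_cons, mul_left_comm] at h
    rcases hπ.dvd_or_dvd ⟨_, h⟩ with ⟨p', rfl⟩ | ⟨q', rfl⟩
    · have h' : p' * q = u * s.prod := mul_left_cancel₀ hπ.ne_zero (by rw [← h, mul_assoc])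
      exact (ih hs' h').imp_left (S.mul_mem hπS)
    · have h' : p * q' = u * s.prod :=
        mul_left_cancel₀ hπ.ne_zero (by rw [← h, mul_left_comm])
      exact (ih hs' h').imp_right (S.mul_mem hπS)

theorem Polynomial.Splits.aeval_eq_prod_roots {k A : Type*} [Field k] [CommRing A] [Algebra k A]
    {F : Polynomial k} (hF : F.Splits) (a : A) :
    Polynomial.aeval a F =
      algebraMap k A F.leadingCoeff * (F.roots.map fun r => a - algebraMap k A r).prod := by
  conv_lhs => rw [hF.eq_prod_roots]
  simp [map_multiset_prod, Multiset.map_map]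

theorem Algebra.mem_adjoin_singleton_of_mul_mem {k A : Type*} [Field k] [IsAlgClosed k]
    [CommRing A] [IsDomain A] [Algebra k A] {g : A} (hg : ∀ c : k, Prime (g - algebraMap k A c))
    (hunits : ∀ u : A, IsUnit u → u ∈ (⊥ : Subalgebra k A)) {p q : A} (hpq0 : p * q ≠ 0)
    (hpq : p * q ∈ Algebra.adjoin k {g}) :
    p ∈ Algebra.adjoin k {g} ∧ q ∈ Algebra.adjoin k {g} := by
  rw [Algebra.adjoin_singleton_eq_range_aeval, AlgHom.mem_range] at hpq
  obtain ⟨F, hF⟩ := hpq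
  have hF0 : F.leadingCoeff ≠ 0 := by
    rintro hlc
    rw [Polynomial.leadingCoeff_eq_zero.mp hlc, map_zero] at hF
    exact hpq0 hF.symm
  refine (Algebra.adjoin k {g}).toSubmonoid.mem_and_mem_of_mul_eq_unit_mul_prod
    (fun u hu => (bot_le : ⊥ ≤ Algebra.adjoin k {g}) (hunits u hu))
    ((isUnit_iff_ne_zero.mpr hF0).map (algebraMap k A))
    _ ?_ (by rw [← hF, (IsAlgClosed.splits F).aeval_eq_prod_roots])
  simp only [Multiset.mem_map]
  rintro _ ⟨c, -, rfl⟩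
  exact ⟨hg c, Subalgebra.sub_mem _ (Algebra.self_mem_adjoin_singleton k g)
    (Subalgebra.algebraMap_mem _ c)⟩

namespace KorasRussell

theorem not_X_zero_dvd {k : Type*} [Field k] (c : k) :
    ¬ (X 0 : MvPolynomial (Fin 3) k) ∣ X 0 + X 1 ^ 2 + X 2 ^ 3 - C c := by
  rintro ⟨f, hf⟩
  have h0 : c = 0 := by simpa using congrArg (eval ![0, 0, 0]) hf
  have h1 : 1 - c = 0 := by simpa using congrArg (eval ![0, 1, 0]) hf
  simp [h0] at h1

theorem prime_sub_C {k : Type*} [Field k] (c : k) :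
    Prime ((X 0 + X 0 ^ 2 * X 1 + X 2 ^ 2 + X 3 ^ 3 : MvPolynomial (Fin 4) k) - C c) := by
  let e : MvPolynomial (Fin 4) k ≃ₐ[k] Polynomial (MvPolynomial (Fin 3) k) :=
    (renameEquiv k (Equiv.swap 0 1)).trans (finSuccEquiv k 3)
  have he : e ((X 0 + X 0 ^ 2 * X 1 + X 2 ^ 2 + X 3 ^ 3 : MvPolynomial (Fin 4) k) - C c) =
      Polynomial.C (X 0 ^ 2) * Polynomial.X + Polynomial.C (X 0 + X 1 ^ 2 + X 2 ^ 3 - C c) := by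
    have h1 : finSuccEquiv k 3 (X 1) = Polynomial.C (X 0) := by
      rw [show (1 : Fin 4) = Fin.succ 0 from rfl, finSuccEquiv_X_succ]
    have h2 : finSuccEquiv k 3 (X 2) = Polynomial.C (X 1) := by
      rw [show (2 : Fin 4) = Fin.succ 1 from rfl, finSuccEquiv_X_succ]
    have h3 : finSuccEquiv k 3 (X 3) = Polynomial.C (X 2) := by
      rw [show (3 : Fin 4) = Fin.succ 2 from rfl, finSuccEquiv_X_succ]
    have hC : finSuccEquiv k 3 (C c) = Polynomial.C (C c) := (finSuccEquiv k 3).commutes c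
    simp only [e, AlgEquiv.trans_apply, renameEquiv_apply, map_sub, map_add, map_mul, map_pow,
      rename_X, rename_C, Equiv.swap_apply_left, Equiv.swap_apply_right,
      Equiv.swap_apply_of_ne_of_ne (by decide : (2 : Fin 4) ≠ 0) (by decide : (2 : Fin 4) ≠ 1),
      Equiv.swap_apply_of_ne_of_ne (by decide : (3 : Fin 4) ≠ 0) (by decide : (3 : Fin 4) ≠ 1),
      finSuccEquiv_X_zero, h1, h2, h3, hC]
    ring
  rw [← MulEquiv.prime_iff e.toMulEquiv]
  show Prime (e _)
  rw [he]
  have hcop : IsRelPrime (X 0 ^ 2) (X 0 + X 1 ^ 2 + X 2 ^ 3 - C c : MvPolynomial (Fin 3) k) :=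
    (X_prime.irreducible.isRelPrime_iff_not_dvd.mpr (not_X_zero_dvd c)).pow_left
  exact (Polynomial.irreducible_C_mul_X_add_C (pow_ne_zero 2 (X_ne_zero 0)) hcop).prime

end KorasRussell

/-- **Example 2.7 (b).** The Koras–Russell threefold polynomial
`g = x + x²y + z² + t³ ∈ ℂ[x,y,z,t]` is factorially closed: if `p q ∈ ℂ[g]` for nonzero
`p, q ∈ ℂ[x,y,z,t]`, then `p ∈ ℂ[g]` and `q ∈ ℂ[g]`.  Here `x = X 0`, `y = X 1`, `z = X 2`,
`t = X 3`. -/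
theorem korasRussell_factoriallyClosed :
    ∀ p q : MvPolynomial (Fin 4) ℂ, p ≠ 0 → q ≠ 0 →
      p * q ∈ Algebra.adjoin ℂ
          {(X 0 + X 0 ^ 2 * X 1 + X 2 ^ 2 + X 3 ^ 3 : MvPolynomial (Fin 4) ℂ)} →
        p ∈ Algebra.adjoin ℂ
            {(X 0 + X 0 ^ 2 * X 1 + X 2 ^ 2 + X 3 ^ 3 : MvPolynomial (Fin 4) ℂ)} ∧
        q ∈ Algebra.adjoin ℂ
            {(X 0 + X 0 ^ 2 * X 1 + X 2 ^ 2 + X 3 ^ 3 : MvPolynomial (Fin 4) ℂ)} := by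
  intro p q hp hq hpq
  refine Algebra.mem_adjoin_singleton_of_mul_mem (fun c => ?_) (fun u hu => ?_)
    (mul_ne_zero hp hq) hpq
  · rw [algebraMap_eq]
    exact KorasRussell.prime_sub_C c
  · obtain ⟨r, -, rfl⟩ := isUnit_iff_eq_C_of_isReduced.mp hu
    rw [← algebraMap_eq]
    exact Subalgebra.algebraMap_mem ⊥ r
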